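/- arXiv:1604.06580 — 2 statements merged into one kernel-verified Lean document; each statement's English description precedes it below -/
import Mathlib

section
/- Let n ∈ ℕ, let F be a Borel probability measure on [0,∞)^n, let m ∈ ℕ, and let A_1,…,A_m ⊆ [0,∞)^n be Borel sets with ⋃_{i=1}^m A_i = [0,∞)^n. Then Rev(F) ≤ Σ_{i=1}^m F(A_i) · Rev(F|_{A_i}) in [0,∞], with the convention that F(S) · Rev(F|_S) := 0 whenever F(S) = 0. -/
open MeasureTheory ProbabilityTheory Set
open scoped NNReal ENNReal

noncomputable section

/-- The space of buyer types for `n` items: vectors in `[0,∞)^n`. -/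
abbrev BuyerType (n : ℕ) := Fin n → ℝ≥0

/-- An `n`-item outcome: allocation probabilities together with a price. -/
abbrev Outcome (n : ℕ) := (Fin n → ℝ) × ℝ

/-- An outcome is valid if all allocation probabilities are in `[0,1]` and the price is `≥ 0`. -/
def ValidOutcome {n : ℕ} (e : Outcome n) : Prop :=
  (∀ i, 0 ≤ e.1 i ∧ e.1 i ≤ 1) ∧ 0 ≤ e.2

/-- The zero entry `(0,…,0;0)`. -/
def zeroEntry (n : ℕ) : Outcome n := (fun _ => 0, 0)

/-- The utility of buyer type `v` from outcome `e`. -/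
def utility {n : ℕ} (e : Outcome n) (v : BuyerType n) : ℝ :=
  (∑ i, e.1 i * (v i : ℝ)) - e.2

/-- An individually rational menu: a set of valid outcomes containing the zero entry. -/
def IRMenu {n : ℕ} (M : Set (Outcome n)) : Prop :=
  (∀ e ∈ M, ValidOutcome e) ∧ zeroEntry n ∈ M

/-- A choice function for menu `M`: for every buyer type it picks a utility-maximizing
entry of maximal price among the utility-maximizing entries, with Borel-measurable price. -/
def IsChoice {n : ℕ} (M : Set (Outcome n)) (t : BuyerType n → Outcome n) : Prop :=
  (∀ v, t v ∈ M) ∧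
  (∀ v, ∀ e ∈ M, utility e v ≤ utility (t v) v) ∧
  (∀ v, ∀ e ∈ M, utility e v = utility (t v) v → e.2 ≤ (t v).2) ∧
  Measurable fun v => (t v).2

/-- The revenue of a menu equipped with choice function `t` from distribution `F`. -/
def revenue {n : ℕ} (t : BuyerType n → Outcome n) (F : Measure (BuyerType n)) : ℝ≥0∞ :=
  ∫⁻ v, ENNReal.ofReal ((t v).2) ∂F

/-- The menu size: the number of entries other than the zero entry. -/
def menuSize {n : ℕ} (M : Set (Outcome n)) : ℕ∞ :=
  (M \ {zeroEntry n}).encard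

/-- The optimal revenue obtainable from `F` by an IR menu with a choice function. -/
def Rev {n : ℕ} (F : Measure (BuyerType n)) : ℝ≥0∞ :=
  ⨆ (Mt : Set (Outcome n) × (BuyerType n → Outcome n))
    (_ : IRMenu Mt.1 ∧ IsChoice Mt.1 Mt.2), revenue Mt.2 F

/-- The optimal revenue obtainable from `F` by an IR menu of menu size at most `C`. -/
def RevC {n : ℕ} (C : ℕ) (F : Measure (BuyerType n)) : ℝ≥0∞ :=
  ⨆ (Mt : Set (Outcome n) × (BuyerType n → Outcome n))
    (_ : IRMenu Mt.1 ∧ IsChoice Mt.1 Mt.2 ∧ menuSize Mt.1 ≤ (C : ℕ∞)),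
    revenue Mt.2 F

/-- Embedding of a single item value as a buyer type for one item. -/
def toOne (x : ℝ≥0) : BuyerType 1 := fun _ => x

/-- The optimal single-item revenue from a value distribution `G` on `[0,∞)`. -/
def Rev1 (G : Measure ℝ≥0) : ℝ≥0∞ := Rev (G.map toOne)

/-- `EU n H`: the set of buyer types with at most one coordinate strictly greater than `H`. -/
def EU (n : ℕ) (H : ℝ) : Set (BuyerType n) :=
  {v | {i : Fin n | H < (v i : ℝ)}.Subsingleton}

/-- A menu is `E`-exclusive if every entry priced above `E` allocates at most one item with
positive probability. -/
def Exclusive {n : ℕ} (E : ℝ) (M : Set (Outcome n)) : Prop :=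
  ∀ e ∈ M, E < e.2 → {i : Fin n | 0 < e.1 i}.Subsingleton


/-
Fix a menu with a choice function. Its revenue is the integral of the price over `F`, which is at
most the sum of the integrals over the cover, and the integral over `A_i` equals
`F(A_i)` times the revenue of the same menu from `F|_{A_i}`, which is at most `Rev(F|_{A_i})`.
-/

lemma lintegral_le_tsum_setLIntegral_of_iUnion_eq_univ {α ι : Type*} [MeasurableSpace α]
    [Countable ι] {μ : Measure α} {s : ι → Set α} (hs : ⋃ i, s i = univ) (f : α → ℝ≥0∞) :
    ∫⁻ x, f x ∂μ ≤ ∑' i, ∫⁻ x in s i, f x ∂μ := by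
  simpa only [hs, Measure.restrict_univ] using lintegral_iUnion_le s f

lemma ProbabilityTheory.measure_smul_cond {Ω : Type*} [MeasurableSpace Ω] {μ : Measure Ω}
    {s : Set Ω} (hs : μ s ≠ ∞) : μ s • μ[|s] = μ.restrict s := by
  by_cases hs₀ : μ s = 0
  · simp [hs₀, Measure.restrict_eq_zero.mpr hs₀]
  · rw [cond, smul_smul, ENNReal.mul_inv_cancel hs₀ hs, one_smul]

lemma revenue_smul {n : ℕ} (t : BuyerType n → Outcome n) (c : ℝ≥0∞)
    (F : Measure (BuyerType n)) : revenue t (c • F) = c * revenue t F :=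
  lintegral_smul_measure c _

lemma revenue_le_rev {n : ℕ} {M : Set (Outcome n)} {t : BuyerType n → Outcome n}
    (hM : IRMenu M) (ht : IsChoice M t) (F : Measure (BuyerType n)) : revenue t F ≤ Rev F :=
  le_iSup₂ (f := fun (Mt : Set (Outcome n) × (BuyerType n → Outcome n))
    (_ : IRMenu Mt.1 ∧ IsChoice Mt.1 Mt.2) => revenue Mt.2 F) (M, t) ⟨hM, ht⟩

theorem rev_le_sum_of_cover_general
    (n : ℕ) (F : Measure (BuyerType n)) (hF : IsProbabilityMeasure F)
    (m : ℕ) (A : Fin m → Set (BuyerType n))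
    (hcover : (⋃ i, A i) = univ) :
    Rev F ≤ ∑ i, F (A i) * Rev (F[|A i]) := by
  refine iSup₂_le fun ⟨M, t⟩ ⟨hM, ht⟩ => ?_
  calc revenue t F ≤ ∑ i, revenue t (F.restrict (A i)) :=
        (lintegral_le_tsum_setLIntegral_of_iUnion_eq_univ hcover _).trans_eq (tsum_fintype _)
    _ = ∑ i, F (A i) * revenue t F[|A i] := by
        simp only [← measure_smul_cond (measure_ne_top F _), revenue_smul]
    _ ≤ ∑ i, F (A i) * Rev F[|A i] := by
        gcongr with i
        exact revenue_le_rev hM ht _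

/-- If Borel sets `A_1, …, A_m` cover the type space, then
`Rev(F) ≤ Σ_i F(A_i)·Rev(F|_{A_i})` (with `F|_S` the conditional measure, which is the zero
measure when `F(S) = 0`, so the convention `F(S)·Rev(F|_S) = 0` for `F(S) = 0` holds
automatically). -/
theorem rev_le_sum_of_cover
    (n : ℕ) (F : Measure (BuyerType n)) (hF : IsProbabilityMeasure F)
    (m : ℕ) (A : Fin m → Set (BuyerType n)) (hA : ∀ i, MeasurableSet (A i))
    (hcover : (⋃ i, A i) = univ) :
    Rev F ≤ ∑ i, F (A i) * Rev (F[|A i]) :=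
  rev_le_sum_of_cover_general n F hF m A hcover

end
end

section
/- Let n ∈ ℕ with n ≥ 2, let H ∈ [0,∞), let ε ∈ (0,1), and set E = 4·(n−1)·H/ε². For every Borel probability measure F on [0,∞)^n with F(EU_H^n) = 1, and for every IR menu M equipped with a choice function t, there exist an E-exclusive IR menu M′ and a choice function t′ for M′ such that Rev_{M′,t′}(F) ≥ (1 − ε) · Rev_{M,t}(F). -/
open MeasureTheory ProbabilityTheory Set
open scoped NNReal ENNReal

noncomputable section

/-!
Keep the entries priced at most `E` that no type prefers to its original choice, and add
single-item entries priced at least `(1 - δ) E` whose price marked up by `1 / (1 - δ)` no type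
prefers either (`δ = ε / 2`). This menu is closed, so a price-maximal choice exists, and it is
measurable because its price is upper semicontinuous in the type. A type of `EU n H` paying
`p ≤ E` keeps its entry or pays at least `(1 - δ) E`; one paying `p > E` gets all but
`(n - 1) H` of its value from a single item, so the markup condition forces a price of at least
`(1 - ε) p` once `p ≥ 4 (n - 1) H / ε²`.
-/
section Menus

variable {n : ℕ}

lemma utility_zeroEntry (v : BuyerType n) : utility (zeroEntry n) v = 0 := by
  simp [utility, zeroEntry]

lemma continuous_utility_uncurry :
    Continuous fun p : Outcome n × BuyerType n => utility p.1 p.2 := by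
  unfold utility
  fun_prop

lemma continuous_utility (v : BuyerType n) : Continuous fun e : Outcome n => utility e v :=
  continuous_utility_uncurry.comp (.prodMk_left v)

lemma ValidOutcome.alloc_mul_le {e : Outcome n} (he : ValidOutcome e) (v : BuyerType n)
    (i : Fin n) : e.1 i * v i ≤ v i :=
  mul_le_of_le_one_left (v i).coe_nonneg (he.1 i).2

lemma ValidOutcome.price_le_of_utility_nonneg {e : Outcome n} (he : ValidOutcome e)
    {v : BuyerType n} (hu : 0 ≤ utility e v) : e.2 ≤ ∑ i, (v i : ℝ) := by
  have := Finset.sum_le_sum fun i (_ : i ∈ Finset.univ) => he.alloc_mul_le v i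
  unfold utility at hu
  linarith

lemma isClosed_setOf_validOutcome : IsClosed {e : Outcome n | ValidOutcome e} := by
  simp only [ValidOutcome, ofPred_and, ofPred_forall]
  refine .inter (isClosed_iInter fun i => .inter ?_ ?_) (isClosed_le (by fun_prop) (by fun_prop))
  all_goals exact isClosed_le (by fun_prop) (by fun_prop)

lemma isCompact_of_validOutcome_of_price_le {S : Set (Outcome n)} (hS : IsClosed S) {B : ℝ}
    (hSB : ∀ e ∈ S, ValidOutcome e ∧ e.2 ≤ B) : IsCompact S := by
  refine ((isCompact_univ_pi fun _ => isCompact_Icc (a := (0 : ℝ)) (b := 1)).prod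
    (isCompact_Icc (a := 0) (b := B)))
    |>.of_isClosed_subset hS fun e he => ?_
  obtain ⟨⟨halloc, hprice⟩, hB⟩ := hSB e he
  exact ⟨fun i _ => halloc i, hprice, hB⟩

variable {M : Set (Outcome n)}

lemma IRMenu.isCompact_inter_utility_ge (hM : IRMenu M) (hcl : IsClosed M) (v : BuyerType n)
    {u : ℝ} (hu : 0 ≤ u) : IsCompact (M ∩ {e | u ≤ utility e v}) :=
  isCompact_of_validOutcome_of_price_le (hcl.inter (isClosed_le continuous_const
    (continuous_utility v))) fun e ⟨heM, he⟩ =>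
      ⟨hM.1 e heM, (hM.1 e heM).price_le_of_utility_nonneg (hu.trans he)⟩

lemma IRMenu.exists_utility_max (hM : IRMenu M) (hcl : IsClosed M) (v : BuyerType n) :
    ∃ e ∈ M, (∀ f ∈ M, utility f v ≤ utility e v) ∧
      ∀ f ∈ M, utility f v = utility e v → f.2 ≤ e.2 := by
  obtain ⟨e₀, ⟨he₀M, -⟩, he₀⟩ := (hM.isCompact_inter_utility_ge hcl v le_rfl).exists_isMaxOn
    ⟨zeroEntry n, hM.2, (utility_zeroEntry v).ge⟩ (continuous_utility v).continuousOn
  have hmax : ∀ f ∈ M, utility f v ≤ utility e₀ v := fun f hf => by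
    by_cases hfu : 0 ≤ utility f v
    · exact he₀ ⟨hf, hfu⟩
    · have : 0 ≤ utility e₀ v := (utility_zeroEntry v) ▸ he₀ ⟨hM.2, (utility_zeroEntry v).ge⟩
      linarith
  have h₀ : 0 ≤ utility e₀ v := (utility_zeroEntry v) ▸ hmax _ hM.2
  obtain ⟨e, ⟨heM, he⟩, heprice⟩ :=
    (hM.isCompact_inter_utility_ge hcl v h₀).exists_isMaxOn ⟨e₀, he₀M, le_refl (utility e₀ v)⟩
      continuous_snd.continuousOn
  have he₀e : utility e v = utility e₀ v := le_antisymm (hmax e heM) he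
  refine ⟨e, heM, fun f hf => he₀e ▸ hmax f hf, fun f hf hfe => heprice ⟨hf, ?_⟩⟩
  exact (hfe.trans he₀e).ge

/-- A limit of maximizers at types converging to `v` is a maximizer at `v`, so the selected
price is upper semicontinuous. -/
lemma IRMenu.isClosed_setOf_le_price (hM : IRMenu M) (hcl : IsClosed M)
    {t : BuyerType n → Outcome n} (htM : ∀ v, t v ∈ M)
    (hmax : ∀ v, ∀ e ∈ M, utility e v ≤ utility (t v) v)
    (htie : ∀ v, ∀ e ∈ M, utility e v = utility (t v) v → e.2 ≤ (t v).2) (c : ℝ) :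
    IsClosed {v | c ≤ (t v).2} := by
  refine IsSeqClosed.isClosed fun vs v hvs hv => ?_
  have hsum : ∀ᶠ k in Filter.atTop, ∑ i, (vs k i : ℝ) ≤ ∑ i, (v i : ℝ) + 1 :=
    ((continuous_finsetSum _ fun i _ => (NNReal.continuous_coe.comp (continuous_apply i))).tendsto
      v |>.comp hv).eventually (eventually_le_nhds (lt_add_one _))
  have hK : IsCompact ({e : Outcome n | ValidOutcome e ∧ e.2 ≤ ∑ i, (v i : ℝ) + 1}) :=
    isCompact_of_validOutcome_of_price_le (isClosed_setOf_validOutcome.inter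
      (isClosed_le continuous_snd continuous_const)) fun e he => he
  obtain ⟨e, -, φ, hφ, he⟩ := hK.tendsto_subseq' (x := fun k => t (vs k)) (hsum.mono fun k hk =>
    ⟨hM.1 _ (htM _), ((hM.1 _ (htM _)).price_le_of_utility_nonneg
      ((utility_zeroEntry (vs k)) ▸ hmax _ _ hM.2)).trans hk⟩).frequently
  have hpair : Filter.Tendsto (fun k => (t (vs (φ k)), vs (φ k))) Filter.atTop (nhds (e, v)) :=
    he.prodMk_nhds (hv.comp hφ.tendsto_atTop)
  have heM : e ∈ M := hcl.mem_of_tendsto he (.of_forall fun k => htM _)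
  have hemax : ∀ f ∈ M, utility f v ≤ utility e v := fun f hf =>
    le_of_tendsto_of_tendsto' ((continuous_utility_uncurry.tendsto _).comp
      (tendsto_const_nhds.prodMk_nhds (hv.comp hφ.tendsto_atTop)))
      ((continuous_utility_uncurry.tendsto _).comp hpair) fun k => hmax _ f hf
  have hce : c ≤ e.2 :=
    ge_of_tendsto ((continuous_snd.tendsto _).comp he) (.of_forall fun k => hvs (φ k))
  exact hce.trans (htie v e heM (le_antisymm (hmax v e heM) (hemax _ (htM v))))

lemma IRMenu.exists_isChoice (hM : IRMenu M) (hcl : IsClosed M) : ∃ t, IsChoice M t := by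
  choose t htM hmax htie using hM.exists_utility_max hcl
  exact ⟨t, htM, hmax, htie, measurable_of_Ici fun c =>
    (hM.isClosed_setOf_le_price hcl htM hmax htie c).measurableSet⟩

end Menus

section Exclusive

variable {n : ℕ}

lemma utility_eq_of_forall_ne_eq_zero {e : Outcome n} {i : Fin n} (he : ∀ j ≠ i, e.1 j = 0)
    (v : BuyerType n) : utility e v = e.1 i * v i - e.2 := by
  rw [utility, Finset.sum_eq_single_of_mem i (Finset.mem_univ i) fun j _ hj => by
    rw [he j hj, zero_mul]]

lemma ValidOutcome.sum_alloc_mul_le {e : Outcome n} (he : ValidOutcome e) {v : BuyerType n}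
    {H : ℝ} {i : Fin n} (hv : ∀ j ≠ i, (v j : ℝ) ≤ H) :
    ∑ j, e.1 j * v j ≤ e.1 i * v i + ((n : ℝ) - 1) * H := by
  rw [← Finset.add_sum_erase _ _ (Finset.mem_univ i)]
  have hcard : ((Finset.univ.erase i).card : ℝ) = (n : ℝ) - 1 := by
    rw [Finset.card_erase_of_mem (Finset.mem_univ i), Finset.card_univ, Fintype.card_fin,
      Nat.cast_pred i.pos]
  gcongr
  calc ∑ j ∈ Finset.univ.erase i, e.1 j * v j ≤ ∑ _j ∈ Finset.univ.erase i, H :=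
        Finset.sum_le_sum fun j hj =>
          (he.alloc_mul_le v j).trans (hv j (Finset.ne_of_mem_erase hj))
    _ = ((n : ℝ) - 1) * H := by rw [Finset.sum_const, nsmul_eq_mul, hcard]

lemma exists_forall_ne_le_of_mem_EU [NeZero n] {H : ℝ} {v : BuyerType n} (hv : v ∈ EU n H) :
    ∃ i, ∀ j ≠ i, (v j : ℝ) ≤ H := by
  rcases eq_empty_or_nonempty {i : Fin n | H < (v i : ℝ)} with hempty | ⟨i, hi⟩
  · exact ⟨0, fun j _ => not_lt.1 fun hj => (hempty ▸ hj : j ∈ (∅ : Set (Fin n)))⟩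
  · exact ⟨i, fun j hj => not_lt.1 fun hj' => hj (hv hj' hi)⟩

lemma isClosed_EU (n : ℕ) (H : ℝ) : IsClosed (EU n H) := by
  have : EU n H =
      ⋂ (i) (j) (_ : i ≠ j), ({v : BuyerType n | (v i : ℝ) ≤ H} ∪ {v | (v j : ℝ) ≤ H}) := by
    ext v
    simp only [EU, mem_ofPred_eq, mem_iInter, mem_union, Set.Subsingleton]
    refine ⟨fun hv i j hij => ?_, fun hv i hi j hj => ?_⟩
    · by_contra! h
      exact hij (hv h.1 h.2)
    · by_contra hij
      rcases hv i j hij with h | h <;> linarith [show H < (v i : ℝ) from hi,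
        show H < (v j : ℝ) from hj]
  rw [this]
  exact isClosed_iInter fun i => isClosed_iInter fun j => isClosed_iInter fun _ =>
    (isClosed_le (by fun_prop) continuous_const).union (isClosed_le (by fun_prop) continuous_const)

def Dominated (t : BuyerType n → Outcome n) (e : Outcome n) : Prop :=
  ∀ w, utility e w ≤ utility (t w) w

lemma isClosed_setOf_dominated (t : BuyerType n → Outcome n) :
    IsClosed {e | Dominated t e} := by
  simp only [Dominated, ofPred_forall]
  exact isClosed_iInter fun w => isClosed_le (continuous_utility w) continuous_const

def exclusiveMenu (t : BuyerType n → Outcome n) (E δ : ℝ) : Set (Outcome n) :=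
  {e | ValidOutcome e ∧ e.2 ≤ E ∧ Dominated t e} ∪
    ⋃ i, {e | ValidOutcome e ∧ (∀ j ≠ i, e.1 j = 0) ∧ (1 - δ) * E ≤ e.2 ∧
      Dominated t (e.1, e.2 / (1 - δ))}

variable {t : BuyerType n → Outcome n} {E δ : ℝ}

lemma isClosed_exclusiveMenu (t : BuyerType n → Outcome n) (E δ : ℝ) :
    IsClosed (exclusiveMenu t E δ) := by
  refine .union ?_ (isClosed_iUnion_of_finite fun i => ?_)
  · simp only [ofPred_and]
    exact isClosed_setOf_validOutcome.inter ((isClosed_le continuous_snd continuous_const).inter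
      (isClosed_setOf_dominated t))
  · simp only [ofPred_and, ofPred_forall]
    exact isClosed_setOf_validOutcome.inter ((isClosed_iInter fun j => isClosed_iInter fun _ =>
      isClosed_eq (by fun_prop) continuous_const).inter
      ((isClosed_le continuous_const continuous_snd).inter
      ((isClosed_setOf_dominated t).preimage (by fun_prop))))

lemma exclusive_exclusiveMenu (t : BuyerType n → Outcome n) (E δ : ℝ) :
    Exclusive E (exclusiveMenu t E δ) := by
  rintro e (⟨-, hE, -⟩ | he) hpE
  · exact absurd hE hpE.not_ge
  · obtain ⟨i, -, hzero, -⟩ := mem_iUnion.1 he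
    intro j hj k hk
    rw [not_imp_comm.1 (hzero j) (ne_of_gt hj), not_imp_comm.1 (hzero k) (ne_of_gt hk)]

variable {M : Set (Outcome n)}

lemma IsChoice.utility_nonneg (hM : zeroEntry n ∈ M) (ht : IsChoice M t) (v : BuyerType n) :
    0 ≤ utility (t v) v :=
  utility_zeroEntry v ▸ ht.2.1 v _ hM

lemma irMenu_exclusiveMenu (hM : zeroEntry n ∈ M) (ht : IsChoice M t) (hE : 0 ≤ E) :
    IRMenu (exclusiveMenu t E δ) := by
  refine ⟨?_, Or.inl ⟨⟨fun _ => ⟨le_rfl, zero_le_one⟩, le_rfl⟩, hE, fun w => ?_⟩⟩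
  · rintro e (⟨he, -⟩ | he)
    · exact he
    · obtain ⟨i, he, -⟩ := mem_iUnion.1 he
      exact he
  · rw [utility_zeroEntry]
    exact ht.utility_nonneg hM w

end Exclusive

section PriceBounds

variable {n : ℕ} {M : Set (Outcome n)} {t t' : BuyerType n → Outcome n} {E δ : ℝ}

lemma ValidOutcome.single {e : Outcome n} (he : ValidOutcome e) (i : Fin n) (p : ℝ) (hp : 0 ≤ p) :
    ValidOutcome (Pi.single i (e.1 i), p) := by
  refine ⟨fun j => ?_, hp⟩
  rcases eq_or_ne j i with rfl | hj
  · simpa using he.1 j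
  · simp [hj]

lemma ValidOutcome.utility_single_le {e : Outcome n} (he : ValidOutcome e) (i : Fin n)
    (w : BuyerType n) : utility (Pi.single i (e.1 i), e.2) w ≤ utility e w := by
  rw [utility_eq_of_forall_ne_eq_zero (i := i) fun j hj => Pi.single_eq_of_ne hj _, utility]
  simp only [Pi.single_eq_same, sub_le_sub_iff_right]
  exact Finset.single_le_sum (f := fun j => e.1 j * w j)
    (fun j _ => mul_nonneg (he.1 j).1 (w j).coe_nonneg) (Finset.mem_univ i)

lemma IsChoice.one_sub_mul_price_le_of_price_le (hM : IRMenu M) (ht : IsChoice M t)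
    (ht' : IsChoice (exclusiveMenu t E δ) t') (hδ0 : 0 ≤ δ) (hδ1 : δ ≤ 1) {v : BuyerType n}
    (hp : (t v).2 ≤ E) : (1 - δ) * (t v).2 ≤ (t' v).2 := by
  have hp0 : 0 ≤ (t v).2 := (hM.1 _ (ht.1 v)).2
  have hlow : t v ∈ exclusiveMenu t E δ :=
    Or.inl ⟨hM.1 _ (ht.1 v), hp, fun w => ht.2.1 w _ (ht.1 v)⟩
  rcases ht'.1 v with ⟨-, -, hdom⟩ | hsingle
  · have := ht'.2.2.1 v _ hlow (le_antisymm (ht'.2.1 v _ hlow) (hdom v))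
    nlinarith
  · obtain ⟨i, -, -, hprice, -⟩ := mem_iUnion.1 hsingle
    nlinarith

/-- The buyer `v` can take its chosen allocation of its one valuable item `i`, at a discount
`δ` on the full price; when the price exceeds `E`, that beats every low-price entry and every
other item, so `t'` sells item `i` at a price `r` with `r / (1 - δ) - r ≥ δ p - (n - 1) H`. -/
lemma IsChoice.one_sub_mul_le_mul_price_of_lt_price [NeZero n] (hM : IRMenu M)
    (ht : IsChoice M t) (ht' : IsChoice (exclusiveMenu t E δ) t') (hδ0 : 0 < δ) (hδ1 : δ < 1)
    {H : ℝ} (hHE : ((n : ℝ) - 1) * H ≤ δ * E) (hnHE : n * H ≤ E) {v : BuyerType n}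
    (hv : v ∈ EU n H) (hp : E < (t v).2) :
    (1 - δ) * (δ * (t v).2 - ((n : ℝ) - 1) * H) ≤ δ * (t' v).2 := by
  obtain ⟨i, hi⟩ := exists_forall_ne_le_of_mem_EU hv
  set p := (t v).2
  set U := utility (t v) v
  have hvalid := hM.1 _ (ht.1 v)
  have hU0 : 0 ≤ U := ht.utility_nonneg hM.2 v
  have hg : (Pi.single i ((t v).1 i), (1 - δ) * p) ∈ exclusiveMenu t E δ := by
    refine Or.inr (mem_iUnion.2 ⟨i, hvalid.single i _ (mul_nonneg (by linarith) hvalid.2),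
      fun j hj => Pi.single_eq_of_ne hj _, by nlinarith, fun w => ?_⟩)
    rw [mul_div_cancel_left₀ _ (by linarith : (1 - δ) ≠ 0)]
    exact (hvalid.utility_single_le i w).trans (ht.2.1 w _ (ht.1 v))
  have hgv : U + (δ * p - ((n : ℝ) - 1) * H) ≤ utility (t' v) v := by
    refine le_trans ?_ (ht'.2.1 v _ hg)
    rw [utility_eq_of_forall_ne_eq_zero (i := i) fun j hj => Pi.single_eq_of_ne hj _]
    have := hvalid.sum_alloc_mul_le hi
    simp only [Pi.single_eq_same, U, utility]
    linarith
  have hgap : 0 < δ * p - ((n : ℝ) - 1) * H := by nlinarith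
  rcases ht'.1 v with ⟨-, -, hdom⟩ | hsingle
  · linarith [hdom v]
  obtain ⟨k, hvalid', hzero, hprice, hdom⟩ := mem_iUnion.1 hsingle
  have hdomv := hdom v
  rw [utility_eq_of_forall_ne_eq_zero (e := ((t' v).1, (t' v).2 / (1 - δ))) hzero] at hdomv
  rw [utility_eq_of_forall_ne_eq_zero hzero] at hgv
  rcases eq_or_ne k i with rfl | hki
  · set r := (t' v).2
    have hr : (1 - δ) * (r / (1 - δ)) = r := mul_div_cancel₀ _ (by linarith)
    calc (1 - δ) * (δ * p - ((n : ℝ) - 1) * H) ≤ (1 - δ) * (r / (1 - δ) - r) := by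
          dsimp only at hdomv
          exact mul_le_mul_of_nonneg_left (by linarith) (by linarith)
      _ = δ * r := by linear_combination hr
  · have : (t' v).1 k * v k ≤ H := (hvalid'.alloc_mul_le v k).trans (hi k hki)
    nlinarith

end PriceBounds

lemma one_sub_mul_le_of_one_sub_half_mul_le {ε A p r : ℝ} (hε : 0 < ε) (hA : 0 ≤ A)
    (hp : 4 * A ≤ ε ^ 2 * p) (h : (1 - ε / 2) * (ε / 2 * p - A) ≤ ε / 2 * r) :
    (1 - ε) * p ≤ r := by
  nlinarith

lemma ofReal_mul_revenue_le_of_ae_le {n : ℕ} {F : Measure (BuyerType n)}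
    {t t' : BuyerType n → Outcome n} {c : ℝ} (hc : 0 ≤ c)
    (h : ∀ᵐ v ∂F, c * (t v).2 ≤ (t' v).2) :
    ENNReal.ofReal c * revenue t F ≤ revenue t' F := by
  rw [revenue, ← lintegral_const_mul' _ _ ENNReal.ofReal_ne_top]
  refine lintegral_mono_ae (h.mono fun v hv => ?_)
  rw [← ENNReal.ofReal_mul hc]
  exact ENNReal.ofReal_le_ofReal hv

/-- For any distribution supported on `EU_H^n` and any IR menu with a choice
function, there is an `E`-exclusive IR menu with a choice function, `E = 4(n-1)H/ε²`,
losing at most a `(1-ε)` multiplicative factor of the revenue. -/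
theorem exclusive_menu_approximation
    (n : ℕ) (hn : 2 ≤ n) (H : ℝ) (hH : 0 ≤ H) (ε : ℝ) (hε0 : 0 < ε) (hε1 : ε < 1)
    (F : Measure (BuyerType n)) (hF : IsProbabilityMeasure F) (hFEU : F (EU n H) = 1)
    (M : Set (Outcome n)) (t : BuyerType n → Outcome n)
    (hM : IRMenu M) (ht : IsChoice M t) :
    ∃ (M' : Set (Outcome n)) (t' : BuyerType n → Outcome n),
      IRMenu M' ∧ Exclusive (4 * ((n : ℝ) - 1) * H / ε ^ 2) M' ∧ IsChoice M' t' ∧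
      ENNReal.ofReal (1 - ε) * revenue t F ≤ revenue t' F := by
  have : NeZero n := ⟨by omega⟩
  set A := ((n : ℝ) - 1) * H
  set E := 4 * ((n : ℝ) - 1) * H / ε ^ 2
  have hHA : H ≤ A :=
    le_mul_of_one_le_left hH (by linarith [show (2 : ℝ) ≤ n by exact_mod_cast hn])
  have hEε : E * ε ^ 2 = 4 * A := by simp only [E, A]; field_simp
  have hE0 : 0 ≤ E := by nlinarith [pow_pos hε0 2]
  have hAE : A ≤ ε / 2 * E := by nlinarith
  have hnHE : n * H ≤ E := by nlinarith
  obtain ⟨t', ht'⟩ := (irMenu_exclusiveMenu (δ := ε / 2) hM.2 ht hE0).exists_isChoice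
    (isClosed_exclusiveMenu t E (ε / 2))
  refine ⟨_, t', irMenu_exclusiveMenu hM.2 ht hE0, exclusive_exclusiveMenu t E _, ht',
    ofReal_mul_revenue_le_of_ae_le (by linarith) ?_⟩
  filter_upwards [(mem_ae_iff_prob_eq_one (isClosed_EU n H).measurableSet).2 hFEU] with v hv
  rcases le_or_gt (t v).2 E with hp | hp
  · nlinarith [ht.one_sub_mul_price_le_of_price_le hM ht' (by linarith) (by linarith) hp,
      (hM.1 _ (ht.1 v)).2]
  · exact one_sub_mul_le_of_one_sub_half_mul_le hε0 (by linarith) (by nlinarith)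
      (ht.one_sub_mul_le_mul_price_of_lt_price hM ht' (by linarith) (by linarith) hAE hnHE hv hp)
end
end
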